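/- arXiv:math-ph/0105034 — 4 statements merged into one kernel-verified Lean document; each statement's English description precedes it below -/
import Mathlib

section
/- If u is a one-sided infinite sequence over a finite alphabet and there exists n₀ with p_u(n₀) ≤ n₀ (where p_u(n) is the number of distinct factors of u of length n), then u is eventually periodic, i.e., there exist k ≥ 1 and n₁ such that u(n+k) = u(n) for all n ≥ n₁. -/
noncomputable def complexity {A : Type*} (u : ℕ → A) (n : ℕ) : ℕ :=
  (Set.range fun m : ℕ => fun i : Fin n => u (m + i.1)).ncard

section aux
variable {A : Type*} [Fintype A] (u : ℕ → A)

private def Win (n m : ℕ) : Fin n → A := fun i => u (m + i.1)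

private lemma finF (n : ℕ) : (Set.range fun m : ℕ => Win u n m).Finite :=
  Set.toFinite _

private lemma image_trunc (n : ℕ) :
    (fun w : Fin (n+1) → A => fun i : Fin n => w i.castSucc) ''
      (Set.range fun m => Win u (n+1) m) = Set.range fun m => Win u n m := by
  ext w
  constructor
  · rintro ⟨v, ⟨m, rfl⟩, rfl⟩
    exact ⟨m, rfl⟩
  · rintro ⟨m, rfl⟩
    exact ⟨Win u (n+1) m, ⟨m, rfl⟩, rfl⟩

private lemma compl_mono (n : ℕ) : complexity u n ≤ complexity u (n+1) := by
  have := image_trunc u n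
  unfold complexity
  calc (Set.range fun m : ℕ => fun i : Fin n => u (m + i.1)).ncard
      = ((fun w : Fin (n+1) → A => fun i : Fin n => w i.castSucc) ''
        (Set.range fun m => Win u (n+1) m)).ncard := by rw [this]; rfl
    _ ≤ (Set.range fun m => Win u (n+1) m).ncard :=
        Set.ncard_image_le (finF u (n+1))

private lemma compl_zero : complexity u 0 = 1 := by
  unfold complexity
  rw [Set.ncard_eq_one]
  exact ⟨fun i : Fin 0 => u (0 + i.1), by
    ext w; simp only [Set.mem_range, Set.mem_singleton_iff]
    constructor
    · rintro ⟨m, rfl⟩; exact Subsingleton.elim _ _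
    · rintro rfl; exact ⟨0, rfl⟩⟩

private lemma exists_stable (n₀ : ℕ) (h : complexity u n₀ ≤ n₀) :
    ∃ n, complexity u (n+1) ≤ complexity u n := by
  by_contra hc
  push_neg at hc
  have key : ∀ n, n + 1 ≤ complexity u n := by
    intro n
    induction n with
    | zero => simp [compl_zero u]
    | succ m ih => have := hc m; omega
  exact absurd (le_trans (key n₀) h) (by omega)

end aux

/-- If for some `n₀` the complexity satisfies `p_u(n₀) ≤ n₀`, then `u` is
eventually periodic. -/
theorem eventually_periodic_of_complexity_le {A : Type*} [Fintype A]
    (u : ℕ → A) (n₀ : ℕ) (h : complexity u n₀ ≤ n₀) :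
    ∃ k : ℕ, 1 ≤ k ∧ ∃ n₁ : ℕ, ∀ n ≥ n₁, u (n + k) = u n := by
  obtain ⟨n, hn⟩ := exists_stable u n₀ h
  -- truncation is injective on length-(n+1) factors
  have heq : complexity u (n+1) = complexity u n :=
    le_antisymm hn (compl_mono u n)
  set T : (Fin (n+1) → A) → (Fin n → A) := fun w i => w i.castSucc with hT
  have hinj : Set.InjOn T (Set.range fun m => Win u (n+1) m) := by
    apply Set.injOn_of_ncard_image_eq _ (finF u (n+1))
    rw [image_trunc u n]
    exact heq.symm
  -- key: equal length-n windows extend equally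
  have ext1 : ∀ a b : ℕ, Win u n a = Win u n b → u (a + n) = u (b + n) := by
    intro a b hab
    have : Win u (n+1) a = Win u (n+1) b := by
      apply hinj ⟨a, rfl⟩ ⟨b, rfl⟩
      funext i
      have := congrFun hab i
      simpa [Win, hT] using this
    have := congrFun this (Fin.last n)
    simpa [Win, Fin.last] using this
  -- equal windows propagate
  have prop : ∀ a b j : ℕ, Win u n a = Win u n b → Win u n (a+j) = Win u n (b+j) := by
    intro a b j
    induction j with
    | zero => simp
    | succ m ih =>
      intro hab
      have h1 := ih hab
      funext i
      simp only [Win]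
      rcases Nat.lt_or_ge (i.1 + 1) n with hi | hi
      · have := congrFun h1 ⟨i.1 + 1, hi⟩
        simp only [Win] at this
        convert this using 2 <;> omega
      · have hi' : i.1 + 1 = n := by omega
        have := ext1 (a+m) (b+m) h1
        convert this using 2 <;> omega
  -- pigeonhole
  obtain ⟨a, b, hne, hab⟩ : ∃ a b : ℕ, a ≠ b ∧ Win u n a = Win u n b :=
    let ⟨a, b, hab, hne⟩ := Finite.exists_ne_map_eq_of_infinite (fun m => Win u n m)
    ⟨a, b, hab, hne⟩
  wlog hlt : a < b generalizing a b
  · exact this b a hne.symm hab.symm (by omega)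
  refine ⟨b - a, by omega, a + n, fun m hm => ?_⟩
  have h1 : Win u n (a + (m - (a+n))) = Win u n (b + (m - (a+n))) := prop a b _ hab
  have := ext1 _ _ h1
  have e1 : a + (m - (a+n)) + n = m := by omega
  have e2 : b + (m - (a+n)) + n = m + (b - a) := by omega
  rw [e1, e2] at this
  exact this.symm
end

section
/- If u : ℕ → 𝒜 is not eventually periodic, then its complexity function satisfies p_u(n) ≥ n + 1 for every n ≥ 1. -/
private def fac {A : Type*} (u : ℕ → A) (n : ℕ) (m : ℕ) : Fin n → A :=
  fun i => u (m + i.1)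

/-- If `u` is not eventually periodic, then `p_u(n) ≥ n + 1` for all `n ≥ 1`. -/
theorem complexity_ge_of_not_eventually_periodic {A : Type*} [Fintype A]
    (u : ℕ → A)
    (h : ¬ ∃ k : ℕ, 1 ≤ k ∧ ∃ n₀ : ℕ, ∀ n ≥ n₀, u (n + k) = u n) :
    ∀ n : ℕ, 1 ≤ n → n + 1 ≤ complexity u n := by
  have hc : ∀ n, complexity u n = (Set.range (fac u n)).ncard := fun n => rfl
  have key : ∀ n : ℕ, complexity u n < complexity u (n + 1) := by
    intro n
    by_contra hle
    push_neg at hle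
    apply h
    set f : (Fin (n + 1) → A) → (Fin n → A) := fun w i => w i.castSucc with hf
    have himg : Set.range (fac u n) = f '' Set.range (fac u (n + 1)) := by
      rw [← Set.range_comp]
      rfl
    have hfin : (Set.range (fac u (n + 1))).Finite := Set.toFinite _
    have hle2 : (Set.range (fac u (n + 1))).ncard ≤ (f '' Set.range (fac u (n + 1))).ncard := by
      rw [← himg, ← hc, ← hc]; exact hle
    have heq : (f '' Set.range (fac u (n + 1))).ncard = (Set.range (fac u (n + 1))).ncard :=
      le_antisymm (Set.ncard_image_le hfin) hle2
    have hinj : Set.InjOn f (Set.range (fac u (n + 1))) :=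
      Set.injOn_of_ncard_image_eq heq hfin
    have P : ∀ a b : ℕ, fac u n a = fac u n b → u (a + n) = u (b + n) := by
      intro a b hab
      have hfab : f (fac u (n + 1) a) = f (fac u (n + 1) b) := by
        have e : ∀ m, f (fac u (n + 1) m) = fac u n m := by
          intro m; funext i; simp [fac, hf]
        rw [e, e, hab]
      have := hinj (Set.mem_range_self a) (Set.mem_range_self b) hfab
      have := congrFun this (Fin.last n)
      simpa [fac, Fin.last] using this
    have chain : ∀ (a b : ℕ), fac u n a = fac u n b →
        ∀ t, fac u n (a + t) = fac u n (b + t) := by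
      intro a b hab t
      induction t with
      | zero => simpa using hab
      | succ t ih =>
        funext i
        show u (a + (t + 1) + i.1) = u (b + (t + 1) + i.1)
        by_cases hi : i.1 + 1 < n
        · have := congrFun ih ⟨i.1 + 1, hi⟩
          simp only [fac] at this
          rw [show a + (t + 1) + i.1 = a + t + (i.1 + 1) by omega,
              show b + (t + 1) + i.1 = b + t + (i.1 + 1) by omega]
          exact this
        · have hi' : i.1 + 1 = n := Nat.le_antisymm i.2 (Nat.not_lt.mp hi)
          have := P (a + t) (b + t) ih
          rw [show a + (t + 1) + i.1 = a + t + n by omega,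
              show b + (t + 1) + i.1 = b + t + n by omega]
          exact this
    obtain ⟨a, b, hne, hab⟩ := Finite.exists_ne_map_eq_of_infinite (fac u n)
    have main : ∀ a b : ℕ, a < b → fac u n a = fac u n b →
        ∃ k, 1 ≤ k ∧ ∃ n₀, ∀ N ≥ n₀, u (N + k) = u N := by
      intro a b hlt hab
      refine ⟨b - a, by omega, a + n, fun N hN => ?_⟩
      have h1 := P (a + (N - (a + n))) (b + (N - (a + n))) (chain a b hab _)
      rw [show a + (N - (a + n)) + n = N by omega,
          show b + (N - (a + n)) + n = N + (b - a) by omega] at h1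
      exact h1.symm
    rcases hne.lt_or_gt with hlt | hlt
    · exact main a b hlt hab
    · exact main b a hlt hab.symm
  have base : 1 ≤ complexity u 0 := by
    rw [hc]
    have : (Set.range (fac u 0)).Nonempty := ⟨_, Set.mem_range_self 0⟩
    exact (Set.ncard_pos (Set.toFinite _)).mpr this
  have all : ∀ n, n + 1 ≤ complexity u n := by
    intro n
    induction n with
    | zero => exact base
    | succ n ih => have := key n; omega
  exact fun n _ => all n
end

section
/- For every n ≥ 0 and every a ≥ 1, the trace map F(x,y,z) = (y, z·U_{a−1}(y) − x·U_{a−2}(y), z·U_a(y) − x·U_{a−1}(y)) preserves the Fricke–Vogt invariant I(x,y,z) = x² + y² + z² − 2xyz − 1, where U_m are the Chebyshev polynomials of the second kind defined by U_{−1} = 0, U_0 = 1, U_{m+1}(x) = 2x·U_m(x) − U_{m−1}(x). -/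
/-- Shifted Chebyshev polynomials of the second kind: `chebU m = U_{m-1}`,
so `chebU 0 = U_{-1} = 0`, `chebU 1 = U_0 = 1`,
`chebU (m+2) x = 2x · chebU (m+1) x − chebU m x`. -/
noncomputable def chebU : ℕ → ℝ → ℝ
  | 0, _ => 0
  | 1, _ => 1
  | (n + 2), x => 2 * x * chebU (n + 1) x - chebU n x

/-- The Fricke–Vogt invariant. -/
def frickeVogt : ℝ × ℝ × ℝ → ℝ := fun v => v.1 ^ 2 + v.2.1 ^ 2 + v.2.2 ^ 2 - 2 * v.1 * v.2.1 * v.2.2 - 1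

lemma chebU_det (n : ℕ) (y : ℝ) :
    chebU (n + 1) y ^ 2 - chebU (n + 2) y * chebU n y = 1 := by
  induction n with
  | zero => simp [chebU]
  | succ m ih =>
    have h1 : chebU (m + 2) y = 2 * y * chebU (m + 1) y - chebU m y := rfl
    have h2 : chebU (m + 3) y = 2 * y * chebU (m + 2) y - chebU (m + 1) y := rfl
    rw [show m + 1 + 1 = m + 2 from rfl, show m + 1 + 2 = m + 3 from rfl, h2, h1]
    linear_combination ih + chebU m y * h1

/-- The trace map `F(x,y,z) = (y, z·U_{a−1}(y) − x·U_{a−2}(y), z·U_a(y) − x·U_{a−1}(y))`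
preserves the Fricke–Vogt invariant (here `U_{a-1} = chebU a`, etc.). -/
theorem traceMap_preserves_frickeVogt (a : ℕ) (ha : 1 ≤ a) (x y z : ℝ) :
    frickeVogt (y, z * chebU a y - x * chebU (a - 1) y,
      z * chebU (a + 1) y - x * chebU a y) = frickeVogt (x, y, z) := by
  obtain ⟨n, rfl⟩ := Nat.exists_eq_add_of_le ha
  simp only [Nat.add_sub_cancel_left, Nat.add_comm 1 n] at *
  have hdet := chebU_det n y
  have hrec : chebU (n + 2) y = 2 * y * chebU (n + 1) y - chebU n y := rfl
  simp only [frickeVogt, hrec, Nat.add_sub_cancel]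
  linear_combination (x ^ 2 + z ^ 2 - 2 * x * y * z) * (hdet + chebU n y * hrec)
end

section
/- Let H be the discrete Schrödinger operator (Hφ)(n) = φ(n+1) + φ(n−1) + V(n)φ(n) on sequences over ℤ, and suppose that for some m ∈ ℤ there are words w_k of lengths L_k → ∞ such that V restricted to [m+1, m+2L_k] equals w_k w_k (a square), and the traces of the SL(2,ℝ) transfer matrices over the blocks w_k at energy E are bounded by a constant C. Then E is not an eigenvalue of H, i.e., there is no nonzero ℓ²(ℤ) solution of Hφ = Eφ. -/
/-- One-step transfer matrix `T(b) = [[E−b, −1],[1,0]]`. -/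
def stepMatrix (E b : ℝ) : Matrix (Fin 2) (Fin 2) ℝ := !![E - b, -1; 1, 0]

/-- Transfer matrix over the block `V(m+1), …, V(m+L)`:
`M = T(V(m+L))⋯T(V(m+1))`. -/
def blockMatrix (V : ℤ → ℝ) (E : ℝ) (m : ℤ) : ℕ → Matrix (Fin 2) (Fin 2) ℝ
  | 0 => 1
  | (L + 1) => stepMatrix E (V (m + L + 1)) * blockMatrix V E m L

/-!
Cayley–Hamilton for the unimodular transfer matrix `M` over `w_k` gives
`Φ(m) = tr M • Φ(m + L_k) - Φ(m + 2 L_k)`, since the potential repeats on the second copy of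
`w_k`. A square-summable solution decays at infinity, so with `tr M` bounded the right-hand side
tends to `0` as `k → ∞`. Hence `Φ(m) = 0`, and a solution of the second-order recursion that
vanishes at two consecutive sites vanishes identically.
-/

open Filter Topology
open scoped Matrix

open Polynomial in
theorem Matrix.mul_self_fin_two {R : Type*} [CommRing R] [Nontrivial R]
    (M : Matrix (Fin 2) (Fin 2) R) : M * M = M.trace • M - M.det • 1 := by
  have h := M.aeval_self_charpoly
  simp only [M.charpoly_fin_two, map_add, map_sub, map_mul, map_pow, aeval_X, aeval_C,
    Algebra.algebraMap_eq_smul_one, smul_one_mul] at h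
  rw [← sq, ← sub_eq_zero, ← h]
  abel

theorem eq_zero_of_forall_eq_smul_sub {ι 𝕜 E : Type*} [NormedField 𝕜] [SeminormedAddCommGroup E]
    [NormedSpace 𝕜 E] [T2Space E] {l : Filter ι} [l.NeBot] {t : ι → 𝕜} {a b : ι → E} {v : E}
    {C : ℝ} (ht : ∀ i, ‖t i‖ ≤ C) (ha : Tendsto a l (𝓝 0)) (hb : Tendsto b l (𝓝 0))
    (hv : ∀ i, v = t i • a i - b i) : v = 0 := by
  have hlim : Tendsto (fun i => t i • a i - b i) l (𝓝 0) := by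
    simpa using (isBoundedUnder_of ⟨C, ht⟩).smul_tendsto_zero ha |>.sub hb
  exact tendsto_nhds_unique tendsto_const_nhds (hlim.congr fun i => (hv i).symm)

theorem tendsto_cofinite_zero_of_summable_sq {α : Type*} {φ : α → ℝ}
    (h : Summable fun n => φ n ^ 2) : Tendsto φ cofinite (𝓝 0) := by
  refine (tendsto_zero_iff_abs_tendsto_zero φ).2 ?_
  simpa [Function.comp_def, Real.sqrt_sq_eq_abs] using h.tendsto_cofinite_zero.sqrt

theorem det_stepMatrix (E b : ℝ) : (stepMatrix E b).det = 1 := by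
  simp [stepMatrix, Matrix.det_fin_two]

theorem det_blockMatrix (V : ℤ → ℝ) (E : ℝ) (m : ℤ) : ∀ L, (blockMatrix V E m L).det = 1
  | 0 => by simp [blockMatrix]
  | L + 1 => by rw [blockMatrix, Matrix.det_mul, det_stepMatrix, det_blockMatrix V E m L, one_mul]

theorem blockMatrix_add_of_forall_eq (V : ℤ → ℝ) (E : ℝ) (m s : ℤ) :
    ∀ L : ℕ, (∀ j : ℕ, 1 ≤ j → j ≤ L → V (m + j + s) = V (m + j)) →
      blockMatrix V E (m + s) L = blockMatrix V E m L
  | 0, _ => rfl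
  | L + 1, hV => by
    have hlast := hV (L + 1) (Nat.le_add_left 1 L) le_rfl
    push_cast at hlast
    rw [blockMatrix, blockMatrix, blockMatrix_add_of_forall_eq V E m s L
      fun j h1 h2 => hV j h1 (Nat.le_succ_of_le h2), show m + s + L + 1 = m + (L + 1) + s by ring,
      hlast, ← add_assoc]

def SolvesSchrodinger (V : ℤ → ℝ) (E : ℝ) (φ : ℤ → ℝ) : Prop :=
  ∀ n : ℤ, φ (n + 1) + φ (n - 1) + V n * φ n = E * φ n

def stateVec (φ : ℤ → ℝ) (n : ℤ) : Fin 2 → ℝ := ![φ (n + 1), φ n]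

theorem tendsto_stateVec_cofinite {φ : ℤ → ℝ} (h : Tendsto φ cofinite (𝓝 0)) :
    Tendsto (stateVec φ) cofinite (𝓝 0) := by
  have hshift : Tendsto (fun n => φ (n + 1)) cofinite (𝓝 0) :=
    h.comp (add_left_injective 1).tendsto_cofinite
  exact tendsto_pi_nhds.2 (Fin.forall_fin_two.2 ⟨hshift, h⟩)

namespace SolvesSchrodinger

variable {V : ℤ → ℝ} {E : ℝ} {φ : ℤ → ℝ}

theorem stepMatrix_mulVec (hφ : SolvesSchrodinger V E φ) (n : ℤ) :
    stepMatrix E (V (n + 1)) *ᵥ stateVec φ n = stateVec φ (n + 1) := by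
  have h := hφ (n + 1)
  rw [add_sub_cancel_right] at h
  ext i
  fin_cases i <;> simp [stepMatrix, stateVec]
  linarith

theorem blockMatrix_mulVec (hφ : SolvesSchrodinger V E φ) (m : ℤ) :
    ∀ L : ℕ, blockMatrix V E m L *ᵥ stateVec φ m = stateVec φ (m + L)
  | 0 => by simp [blockMatrix]
  | L + 1 => by
    rw [blockMatrix, ← Matrix.mulVec_mulVec, hφ.blockMatrix_mulVec m L, hφ.stepMatrix_mulVec]
    push_cast
    ring_nf

theorem stateVec_eq_trace_smul_sub (hφ : SolvesSchrodinger V E φ) {m : ℤ} {L : ℕ}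
    (hV : ∀ j : ℕ, 1 ≤ j → j ≤ L → V (m + j + L) = V (m + j)) :
    stateVec φ m = (blockMatrix V E m L).trace • stateVec φ (m + L) - stateVec φ (m + L + L) := by
  have hfirst := hφ.blockMatrix_mulVec m L
  have hsecond := hφ.blockMatrix_mulVec (m + L) L
  rw [blockMatrix_add_of_forall_eq V E m L L hV] at hsecond
  have hsquare := congrArg (· *ᵥ stateVec φ m) (blockMatrix V E m L).mul_self_fin_two
  simp only [← Matrix.mulVec_mulVec, hfirst, hsecond, Matrix.sub_mulVec, Matrix.smul_mulVec,
    Matrix.one_mulVec, det_blockMatrix, one_smul] at hsquare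
  rw [hsquare]
  abel

theorem eq_zero_of_stateVec_eq_zero (hφ : SolvesSchrodinger V E φ) {m : ℤ}
    (h : stateVec φ m = 0) : φ = 0 := by
  have hpair : ∀ n, φ n = 0 ∧ φ (n + 1) = 0 := by
    intro n
    induction n using Int.inductionOn' (b := m) with
    | zero => simpa [stateVec, and_comm] using h
    | succ k _ ih =>
      have := hφ (k + 1)
      simp only [add_sub_cancel_right, ih.1, ih.2] at this
      exact ⟨ih.2, by linarith⟩
    | pred k _ ih =>
      have := hφ k
      simp only [ih.1, ih.2] at this
      exact ⟨by linarith, by simpa using ih.1⟩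
  exact funext fun n => (hpair n).1

end SolvesSchrodinger

/-- Gordon's two-block criterion: if `V` has squares `w_k w_k` of lengths
`L k → ∞` starting at `m`, and the traces of the transfer matrices over the
blocks `w_k` at energy `E` are bounded, then `E` is not an eigenvalue: every
square-summable solution of the difference equation is zero. -/
theorem gordon_two_block (V : ℤ → ℝ) (E C : ℝ) (m : ℤ) (L : ℕ → ℕ)
    (hL : Filter.Tendsto L Filter.atTop Filter.atTop)
    (hsq : ∀ k : ℕ, ∀ j : ℕ, 1 ≤ j → j ≤ L k →
      V (m + (j : ℤ) + (L k : ℤ)) = V (m + (j : ℤ)))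
    (htr : ∀ k : ℕ, |(blockMatrix V E m (L k)).trace| ≤ C)
    (φ : ℤ → ℝ)
    (hφ : ∀ n : ℤ, φ (n + 1) + φ (n - 1) + V n * φ n = E * φ n)
    (hl2 : Summable fun n : ℤ => φ n ^ 2) :
    φ = 0 := by
  have hsol : SolvesSchrodinger V E φ := hφ
  have hdecay : Tendsto (stateVec φ) atTop (𝓝 0) :=
    (tendsto_stateVec_cofinite (tendsto_cofinite_zero_of_summable_sq hl2)).mono_left
      atTop_le_cofinite
  have hLZ : Tendsto (fun k => (L k : ℤ)) atTop atTop := tendsto_natCast_atTop_atTop.comp hL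
  have hfirst : Tendsto (fun k => m + (L k : ℤ)) atTop atTop :=
    tendsto_atTop_add_const_left _ m hLZ
  exact hsol.eq_zero_of_stateVec_eq_zero (m := m) <|
    eq_zero_of_forall_eq_smul_sub htr
      (hdecay.comp hfirst) (hdecay.comp (hfirst.atTop_add_atTop hLZ))
      fun k => hsol.stateVec_eq_trace_smul_sub (hsq k)
end
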